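/- Let (X, Σ, μ) be a finite measure space with μ(X) > 0 and E a Banach lattice. If B(X, E, μ) is a KB-space, then E is a KB-space. -/

import Mathlib

open MeasureTheory Filter Topology

/-- A Banach lattice is a KB-space if every increasing norm bounded sequence of positive
elements is norm convergent. -/
def KBSpace (G : Type*) [NormedAddCommGroup G] [Lattice G] [IsOrderedAddMonoid G] [HasSolidNorm G] : Prop :=
  ∀ x : ℕ → G, Monotone x → (∀ n, 0 ≤ x n) → (∃ M : ℝ, ∀ n, ‖x n‖ ≤ M) →
    ∃ a : G, Tendsto x atTop (𝓝 a)

/-! A monotone additive map `T : E → F` with `c ‖a‖ ≤ ‖T a‖ ≤ C ‖a‖` carries increasing norm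
bounded positive sequences of `E` to sequences of the same kind in `F`. If `F` is a KB-space,
their images converge, hence are Cauchy; the lower bound pulls the Cauchy property back to `E`,
where completeness gives the limit. For `E` inside `L^p(X, E, μ)` take `T` to be the embedding
by constant functions, for which `‖T a‖ = μ(X)^(1/p) ‖a‖`. -/

theorem KBSpace.of_lipschitz_antilipschitz {E F : Type*}
    [NormedAddCommGroup E] [Lattice E] [IsOrderedAddMonoid E] [HasSolidNorm E] [CompleteSpace E]
    [NormedAddCommGroup F] [Lattice F] [IsOrderedAddMonoid F] [HasSolidNorm F]
    (hF : KBSpace F) (T : E →+ F) (hT : Monotone T) {K K' : NNReal}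
    (hlip : LipschitzWith K T) (hanti : AntilipschitzWith K' T) : KBSpace E := by
  rintro x hmono hpos ⟨M, hM⟩
  have hTx_bdd : ∀ n, ‖T (x n)‖ ≤ K * M := fun n =>
    (hlip.norm_le_mul (map_zero T) (x n)).trans (by gcongr; exact hM n)
  have hTx_pos : ∀ n, 0 ≤ T (x n) := fun n => map_zero T ▸ hT (hpos n)
  obtain ⟨b, hb⟩ := hF (T ∘ x) (hT.comp hmono) hTx_pos ⟨_, hTx_bdd⟩
  have hx : CauchySeq x :=
    (hanti.isUniformInducing hlip.uniformContinuous).cauchy_map_iff.mp hb.cauchySeq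
  exact cauchySeq_tendsto_of_complete hx

namespace MeasureTheory.Lp

variable {X E : Type*} [MeasurableSpace X] (μ : Measure X) [IsFiniteMeasure μ]
  [NormedAddCommGroup E] (p : ENNReal)

theorem const_mono [PartialOrder E] : Monotone (Lp.const p μ : E → Lp E p μ) := fun a b hab => by
  rw [← Lp.coeFn_le]
  filter_upwards [Lp.coeFn_const p μ a, Lp.coeFn_const p μ b] with y hya hyb
  rw [hya, hyb]
  exact hab

theorem lipschitzWith_const [Fact (1 ≤ p)] :
    LipschitzWith (μ.real Set.univ ^ (1 / p.toReal)).toNNReal (Lp.const p μ : E → Lp E p μ) :=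
  AddMonoidHomClass.lipschitz_of_bound _ _ fun a => (Lp.norm_const_le p μ a).trans_eq (mul_comm _ _)

theorem exists_antilipschitzWith_const [Fact (1 ≤ p)] [NeZero μ] (hp : p ≠ 0) :
    ∃ K, AntilipschitzWith K (Lp.const p μ : E → Lp E p μ) := by
  have hμ : 0 < μ.real Set.univ := by
    simpa [measureReal_def, ENNReal.toReal_pos_iff] using (NeZero.ne μ)
  refine antilipschitzWith_iff_exists_mul_le_norm.mpr
    ⟨_, Real.rpow_pos_of_pos hμ (1 / p.toReal), fun a => ?_⟩
  rw [Lp.norm_const p μ a hp, mul_comm]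

end MeasureTheory.Lp

theorem KBSpace.of_Lp {X E : Type*} [MeasurableSpace X] (μ : Measure X) [IsFiniteMeasure μ]
    [NeZero μ] [NormedAddCommGroup E] [Lattice E] [IsOrderedAddMonoid E] [HasSolidNorm E]
    [CompleteSpace E] (p : ENNReal) [Fact (1 ≤ p)] (hB : KBSpace (Lp E p μ)) : KBSpace E := by
  obtain ⟨K, hanti⟩ : ∃ K, AntilipschitzWith K (Lp.const p μ : E → Lp E p μ) :=
    Lp.exists_antilipschitzWith_const μ p (zero_lt_one.trans_le Fact.out).ne'
  exact hB.of_lipschitz_antilipschitz _ (Lp.const_mono μ p) (Lp.lipschitzWith_const μ p) hanti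

/-- If `μ(X) > 0` and `B(X, E, μ)` is a KB-space, then so is `E`. -/
theorem stmt_9 {X : Type*} [MeasurableSpace X] (μ : Measure X) [IsFiniteMeasure μ] (hμ : 0 < μ Set.univ)
    {E : Type*} [NormedAddCommGroup E] [Lattice E] [IsOrderedAddMonoid E] [HasSolidNorm E] [CompleteSpace E]
    (hB : KBSpace (Lp E 1 μ)) : KBSpace E :=
  have : NeZero μ := ⟨Measure.measure_univ_pos.mp hμ⟩
  hB.of_Lp μ 1
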